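/- arXiv:2408.08326 — 3 statements merged into one kernel-verified Lean document; each statement's English description precedes it below -/
import Mathlib

section
/- Let r₁ > 0 and let A, B : ℕ → ℂ satisfy Σ_{j=0}^∞ (|A_j| + |B_j|) r₁^{−j} < ∞; define Σ₀(z) = Σ_{j=0}^∞ A_j z^{−j} and Σ₁(z) = Σ_{j=0}^∞ B_j z^{−j} for |z| ≥ r₁. Let Ω = {z ∈ ℂ : Im z < 0 or Re z > 0} and let h₀, h₁ : Ω → ℂ be holomorphic. Assume: (i) h₀(r)Σ₀(r) + h₁(r)Σ₁(r) = 0 for every real r ≥ r₁; (ii) there is a sequence (z_n) in Ω with |z_n| → ∞, h₀(z_n) = 0, and h₁(z_n) ≠ 0 for every n; (iii) h₀(r) ≠ 0 for every real r ≥ r₁. Then A_j = 0 and B_j = 0 for every j ∈ ℕ. -/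
/-!
Each series `Σ(z) = ∑ C j z⁻ʲ` is a power series in `z⁻¹` with radius at least `r₁⁻¹`, so it is
holomorphic on `|z| > r₁` and, by uniqueness of power series coefficients, its coefficients vanish
as soon as it has zeros accumulating at infinity. The region `Ω ∩ {|z| > r₁}` is connected (the
exponential image of a half-strip), so `h₀ Σ₀ + h₁ Σ₁`, which vanishes on the ray `(r₁, ∞)`,
vanishes on all of it. Evaluating at the zeros `z n` of `h₀` gives `Σ₁ (z n) = 0`, hence `B = 0`;
then `h₀ Σ₀ = 0` on the ray with `h₀ ≠ 0` there gives `A = 0`.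
-/

open Complex Filter Topology FormalMultilinearSeries Set

section InversePowerSeries

variable {C : ℕ → ℂ} {r : ℝ}

lemma tsum_div_pow_eq_ofScalarsSum_inv (z : ℂ) :
    ∑' j, C j / z ^ j = ofScalarsSum C z⁻¹ := by
  simp [ofScalars_sum_eq, div_eq_mul_inv]

lemma hasFPowerSeriesOnBall_ofScalarsSum (hr : 0 < r) (hC : Summable fun j => ‖C j‖ / r ^ j) :
    HasFPowerSeriesOnBall (ofScalarsSum C) (ofScalars ℂ C) 0 (ENNReal.ofReal r⁻¹) := by
  have hradius : ENNReal.ofReal r⁻¹ ≤ (ofScalars ℂ C).radius := by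
    refine (ofScalars ℂ C).le_radius_of_summable ?_
    simpa [Real.coe_toNNReal _ (inv_nonneg.2 hr.le), div_eq_mul_inv] using hC
  have hpos : 0 < ENNReal.ofReal r⁻¹ := ENNReal.ofReal_pos.2 (inv_pos.2 hr)
  exact ((ofScalars ℂ C).hasFPowerSeriesOnBall (hpos.trans_le hradius)).mono hpos hradius

lemma differentiableOn_tsum_div_pow (hr : 0 < r) (hC : Summable fun j => ‖C j‖ / r ^ j) :
    DifferentiableOn ℂ (fun z => ∑' j, C j / z ^ j) {z | r < ‖z‖} := by
  simp only [tsum_div_pow_eq_ofScalarsSum_inv]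
  have hg := (hasFPowerSeriesOnBall_ofScalarsSum hr hC).differentiableOn
  rw [Metric.eball_ofReal] at hg
  refine hg.comp (differentiableOn_inv.mono fun z hz => ?_) fun z hz => ?_
  · exact norm_pos_iff.1 (hr.trans hz)
  · simpa [norm_inv] using inv_strictAnti₀ hr hz

lemma eq_zero_of_frequently_tsum_div_pow_eq_zero (hr : 0 < r)
    (hC : Summable fun j => ‖C j‖ / r ^ j)
    (h : ∃ᶠ z in Bornology.cobounded ℂ, ∑' j, C j / z ^ j = 0) : C = 0 := by
  have hP := (hasFPowerSeriesOnBall_ofScalarsSum hr hC).hasFPowerSeriesAt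
  have hzero : ∃ᶠ u in 𝓝[≠] (0 : ℂ), ofScalarsSum C u = 0 :=
    tendsto_inv₀_cobounded'.frequently (p := fun u => ofScalarsSum C u = 0)
      (by simpa only [tsum_div_pow_eq_ofScalarsSum_inv] using h)
  exact (ofScalars_series_eq_zero (E := ℂ) (c := C)).1 <|
    hP.eq_zero_of_eventually (hP.analyticAt.frequently_zero_iff_eventually_zero.1 hzero)

end InversePowerSeries

lemma Complex.im_neg_or_re_pos_iff_arg_lt {z : ℂ} (hz : z ≠ 0) :
    z.im < 0 ∨ 0 < z.re ↔ arg z < Real.pi / 2 := by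
  refine ⟨?_, fun h => ?_⟩
  · rintro (him | hre)
    · exact (arg_neg_iff.2 him).trans (by positivity)
    · exact (le_abs_self _).trans_lt (abs_arg_lt_pi_div_two_iff.2 (Or.inl hre))
  · refine (lt_or_ge z.im 0).imp_right fun him => ?_
    have harg : |arg z| < Real.pi / 2 := by rwa [abs_of_nonneg (arg_nonneg_iff.2 him)]
    exact (abs_arg_lt_pi_div_two_iff.1 harg).resolve_right hz

lemma Complex.exp_image_halfStrip {r : ℝ} (hr : 0 < r) :
    exp '' {w | Real.log r < w.re ∧ -Real.pi < w.im ∧ w.im < Real.pi / 2} =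
      {z : ℂ | z.im < 0 ∨ 0 < z.re} ∩ {z | r < ‖z‖} := by
  ext z
  constructor
  · rintro ⟨w, ⟨hre, him₁, him₂⟩, rfl⟩
    have harg : arg (exp w) = w.im := by
      rw [← log_im, log_exp him₁ (by linarith [Real.pi_pos])]
    refine ⟨(im_neg_or_re_pos_iff_arg_lt (exp_ne_zero w)).2 (harg ▸ him₂), ?_⟩
    rwa [mem_ofPred_eq, norm_exp, ← Real.log_lt_iff_lt_exp hr]
  · rintro ⟨hΩ, hnorm⟩
    have hz : z ≠ 0 := norm_pos_iff.1 (hr.trans hnorm)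
    refine ⟨log z, ⟨?_, ?_, ?_⟩, exp_log hz⟩
    · rw [log_re]; exact Real.log_lt_log hr hnorm
    · rw [log_im]; exact neg_pi_lt_arg z
    · rw [log_im]; exact (im_neg_or_re_pos_iff_arg_lt hz).1 hΩ

lemma isPreconnected_inter_norm_gt {r : ℝ} (hr : 0 < r) :
    IsPreconnected ({z : ℂ | z.im < 0 ∨ 0 < z.re} ∩ {z | r < ‖z‖}) := by
  rw [← exp_image_halfStrip hr]
  have hconv : Convex ℝ {w : ℂ | Real.log r < w.re ∧ -Real.pi < w.im ∧ w.im < Real.pi / 2} :=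
    (convex_halfSpace_re_gt _).inter
      ((convex_halfSpace_im_gt _).inter (convex_halfSpace_im_lt _))
  exact hconv.isPreconnected.image _ continuous_exp.continuousOn

lemma isOpen_inter_norm_gt (r : ℝ) :
    IsOpen ({z : ℂ | z.im < 0 ∨ 0 < z.re} ∩ {z | r < ‖z‖}) :=
  ((isOpen_lt continuous_im continuous_const).union
    (isOpen_lt continuous_const continuous_re)).inter (isOpen_lt continuous_const continuous_norm)

lemma Complex.frequently_nhdsNE_ofReal {p : ℂ → Prop} {x : ℝ} (h : ∀ᶠ y : ℝ in 𝓝 x, p y) :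
    ∃ᶠ z in 𝓝[≠] (x : ℂ), p z := by
  have hmaps : MapsTo ofReal {x}ᶜ {(x : ℂ)}ᶜ := fun _ hy => ofReal_injective.ne hy
  exact (continuous_ofReal.continuousWithinAt.tendsto_nhdsWithin hmaps).frequently
    (h.filter_mono nhdsWithin_le_nhds).frequently

lemma eqOn_zero_of_forall_ofReal_gt {f : ℂ → ℂ} {r : ℝ} (hr : 0 < r)
    (hf : DifferentiableOn ℂ f ({z : ℂ | z.im < 0 ∨ 0 < z.re} ∩ {z | r < ‖z‖}))
    (h : ∀ x : ℝ, r < x → f x = 0) :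
    EqOn f 0 ({z : ℂ | z.im < 0 ∨ 0 < z.re} ∩ {z | r < ‖z‖}) := by
  have hmem : ((r + 1 : ℝ) : ℂ) ∈ {z : ℂ | z.im < 0 ∨ 0 < z.re} ∩ {z | r < ‖z‖} :=
    ⟨Or.inr (by rw [ofReal_re]; linarith), by
      rw [mem_ofPred_eq, norm_real, Real.norm_of_nonneg (by linarith)]; linarith⟩
  refine (hf.analyticOnNhd (isOpen_inter_norm_gt r)).eqOn_zero_of_preconnected_of_frequently_eq_zero
      (isPreconnected_inter_norm_gt hr) hmem (frequently_nhdsNE_ofReal ?_)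
  filter_upwards [lt_mem_nhds (by linarith : r < r + 1)] with x hx using h x hx

/-- Lemma 1 (abstract form): if `h₀ Σ₀ + h₁ Σ₁ = 0` on `[r₁, ∞)` for absolutely convergent
inverse-power series `Σ₀, Σ₁`, where `h₀, h₁` are holomorphic on
`Ω = {Im z < 0 or Re z > 0}`, `h₀` has a sequence of zeros in `Ω` going to infinity at which
`h₁` does not vanish, and `h₀` does not vanish on `[r₁, ∞)`, then all coefficients vanish. -/
theorem karp_uniqueness_abstract
    (r₁ : ℝ) (hr₁ : 0 < r₁) (A B : ℕ → ℂ)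
    (hsum : Summable fun j : ℕ => (‖A j‖ + ‖B j‖) / r₁ ^ j)
    (h₀ h₁ : ℂ → ℂ)
    (hΩ₀ : DifferentiableOn ℂ h₀ {z : ℂ | z.im < 0 ∨ 0 < z.re})
    (hΩ₁ : DifferentiableOn ℂ h₁ {z : ℂ | z.im < 0 ∨ 0 < z.re})
    (hvanish : ∀ r : ℝ, r₁ ≤ r →
      h₀ r * (∑' j : ℕ, A j / (r : ℂ) ^ j) + h₁ r * (∑' j : ℕ, B j / (r : ℂ) ^ j) = 0)
    (hzeros : ∃ z : ℕ → ℂ,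
      (∀ n, z n ∈ {w : ℂ | w.im < 0 ∨ 0 < w.re} ∧ h₀ (z n) = 0 ∧ h₁ (z n) ≠ 0) ∧
      Tendsto (fun n => ‖z n‖) atTop atTop)
    (hnonzero : ∀ r : ℝ, r₁ ≤ r → h₀ (r : ℂ) ≠ 0) :
    ∀ j : ℕ, A j = 0 ∧ B j = 0 := by
  obtain ⟨z, hz, hz_norm⟩ := hzeros
  have hA : Summable fun j => ‖A j‖ / r₁ ^ j :=
    hsum.of_nonneg_of_le (fun _ => by positivity) fun j => by gcongr; simp
  have hB : Summable fun j => ‖B j‖ / r₁ ^ j :=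
    hsum.of_nonneg_of_le (fun _ => by positivity) fun j => by gcongr; simp
  have hdiff : DifferentiableOn ℂ (fun w => h₀ w * (∑' j, A j / w ^ j) + h₁ w * (∑' j, B j / w ^ j))
      ({z : ℂ | z.im < 0 ∨ 0 < z.re} ∩ {z | r₁ < ‖z‖}) :=
    ((hΩ₀.mono inter_subset_left).mul ((differentiableOn_tsum_div_pow hr₁ hA).mono
      inter_subset_right)).add
    ((hΩ₁.mono inter_subset_left).mul ((differentiableOn_tsum_div_pow hr₁ hB).mono
      inter_subset_right))
  have hf := eqOn_zero_of_forall_ofReal_gt hr₁ hdiff fun x hx => hvanish x hx.le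
  have hB0 : B = 0 := by
    refine eq_zero_of_frequently_tsum_div_pow_eq_zero hr₁ hB
      ((tendsto_norm_atTop_iff_cobounded.1 hz_norm).frequently (Eventually.frequently ?_))
    filter_upwards [hz_norm.eventually_gt_atTop r₁] with n hn
    have := hf ⟨(hz n).1, hn⟩
    simp only [(hz n).2.1, zero_mul, zero_add, Pi.zero_apply] at this
    exact (mul_eq_zero.1 this).resolve_left (hz n).2.2
  have hA0 : A = 0 := by
    refine eq_zero_of_frequently_tsum_div_pow_eq_zero hr₁ hA
      ((RCLike.tendsto_ofReal_atTop_cobounded ℂ).frequently (Eventually.frequently ?_))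
    filter_upwards [eventually_ge_atTop r₁] with x hx
    have := hvanish x hx
    simp only [hB0, Pi.zero_apply, zero_div, tsum_zero, mul_zero, add_zero] at this
    exact (mul_eq_zero.1 this).resolve_left (hnonzero x hx)
  simp [hA0, hB0]
end

section
/- For ν ∈ {0,1} and j ∈ ℕ define C_{νj} = ((1/2 − ν)_j · Γ(ν + j + 1/2)) / (j! · Γ(ν + 1/2) · (2i)^j), where (a)_j denotes the Pochhammer symbol. Let f : ℕ → (ℝ → ℂ) be given, and suppose (F, G) and (F̃, G̃) are two pairs of sequences of functions ℕ → (ℝ → ℂ) which both satisfy, for all n ∈ ℕ and φ ∈ ℝ: the symmetries F_n(φ) = (−1)^n F_n(φ + π), G_n(φ) = (−1)^{n+1} G_n(φ + π), and the relations f_n(φ) = F_n(φ) − i G_n(φ) + Σ_{j=1}^{n} (C_{0j} F_{n−j}(φ) − i C_{1j} G_{n−j}(φ)) and f_n(φ + π) = F_n(φ + π) − i G_n(φ + π) + Σ_{j=1}^{n} (C_{0j} F_{n−j}(φ + π) − i C_{1j} G_{n−j}(φ + π)). Then F_n = F̃_n and G_n = G̃_n for all n ∈ ℕ; that is, the coefficients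 f₀, …, f_n uniquely determine F₀, G₀, …, F_n, G_n recursively. -/
open Complex Real Finset

noncomputable section

/-- The coefficients `C_{νj} = ((1/2 − ν)_j Γ(ν + j + 1/2)) / (j! Γ(ν + 1/2) (2i)^j)` of the
asymptotic expansion of the Hankel functions of the first kind. -/
def hankelCoeff (ν j : ℕ) : ℂ :=
  ((ascPochhammer ℂ j).eval (1 / 2 - (ν : ℂ)) * Complex.Gamma ((ν : ℂ) + j + 1 / 2)) /
    ((j.factorial : ℂ) * Complex.Gamma ((ν : ℂ) + 1 / 2) * (2 * Complex.I) ^ j)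

/-- Theorem 3 (uniqueness form): the far-field coefficients `f₀, …, f_n` uniquely determine the
Karp coefficients `F₀, G₀, …, F_n, G_n` via the symmetries and the relations (5.3), (5.4). -/
theorem karp_coefficients_unique
    (f : ℕ → ℝ → ℂ) (F G F' G' : ℕ → ℝ → ℂ)
    (hsymF : ∀ (n : ℕ) (φ : ℝ), F n φ = (-1 : ℂ) ^ n * F n (φ + π))
    (hsymG : ∀ (n : ℕ) (φ : ℝ), G n φ = (-1 : ℂ) ^ (n + 1) * G n (φ + π))
    (hsymF' : ∀ (n : ℕ) (φ : ℝ), F' n φ = (-1 : ℂ) ^ n * F' n (φ + π))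
    (hsymG' : ∀ (n : ℕ) (φ : ℝ), G' n φ = (-1 : ℂ) ^ (n + 1) * G' n (φ + π))
    (hrel : ∀ (n : ℕ) (φ : ℝ),
      f n φ = F n φ - Complex.I * G n φ +
        ∑ j ∈ Finset.Icc 1 n,
          (hankelCoeff 0 j * F (n - j) φ - Complex.I * hankelCoeff 1 j * G (n - j) φ))
    (hrelπ : ∀ (n : ℕ) (φ : ℝ),
      f n (φ + π) = F n (φ + π) - Complex.I * G n (φ + π) +
        ∑ j ∈ Finset.Icc 1 n,
          (hankelCoeff 0 j * F (n - j) (φ + π) - Complex.I * hankelCoeff 1 j * G (n - j) (φ + π)))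
    (hrel' : ∀ (n : ℕ) (φ : ℝ),
      f n φ = F' n φ - Complex.I * G' n φ +
        ∑ j ∈ Finset.Icc 1 n,
          (hankelCoeff 0 j * F' (n - j) φ - Complex.I * hankelCoeff 1 j * G' (n - j) φ))
    (hrelπ' : ∀ (n : ℕ) (φ : ℝ),
      f n (φ + π) = F' n (φ + π) - Complex.I * G' n (φ + π) +
        ∑ j ∈ Finset.Icc 1 n,
          (hankelCoeff 0 j * F' (n - j) (φ + π) -
            Complex.I * hankelCoeff 1 j * G' (n - j) (φ + π))) :
    ∀ n : ℕ, F n = F' n ∧ G n = G' n := by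
  intro n
  induction n using Nat.strong_induction_on with
  | _ n ih =>
    have key : ∀ φ : ℝ, F n φ - Complex.I * G n φ = F' n φ - Complex.I * G' n φ := by
      intro φ
      have h1 := hrel n φ
      have h2 := hrel' n φ
      have hsum : ∀ j ∈ Finset.Icc 1 n,
          (hankelCoeff 0 j * F (n - j) φ - Complex.I * hankelCoeff 1 j * G (n - j) φ) =
          (hankelCoeff 0 j * F' (n - j) φ - Complex.I * hankelCoeff 1 j * G' (n - j) φ) := by
        intro j hj
        simp only [Finset.mem_Icc] at hj
        obtain ⟨hF, hG⟩ := ih (n - j) (by omega)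
        rw [hF, hG]
      rw [Finset.sum_congr rfl hsum] at h1
      linear_combination h2 - h1
    have main : ∀ φ : ℝ, F n (φ + π) = F' n (φ + π) ∧ G n (φ + π) = G' n (φ + π) := by
      intro φ
      have e1 := key φ
      have e2 := key (φ + π)
      rw [hsymF n φ, hsymG n φ, hsymF' n φ, hsymG' n φ] at e1
      have hne : ((-1 : ℂ) ^ n) ≠ 0 := pow_ne_zero _ (by norm_num)
      have e1' : (-1 : ℂ) ^ n * (F n (φ + π) + Complex.I * G n (φ + π)) =
          (-1 : ℂ) ^ n * (F' n (φ + π) + Complex.I * G' n (φ + π)) := by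
        linear_combination e1
      have hc := mul_left_cancel₀ hne e1'
      have hz : 2 * Complex.I * (G n (φ + π) - G' n (φ + π)) = 0 := by
        linear_combination hc - e2
      have hG : G n (φ + π) = G' n (φ + π) := by
        rcases mul_eq_zero.mp hz with h | h
        · exact absurd h (by simp [Complex.I_ne_zero])
        · exact sub_eq_zero.mp h
      refine ⟨?_, hG⟩
      rw [hG] at hc
      exact add_right_cancel hc
    constructor <;> funext ψ
    · have := (main (ψ - π)).1
      simpa using this
    · have := (main (ψ - π)).2
      simpa using this
end
end

section
/- Let κ > 0 and n ∈ ℕ. Let h₀, h₁ : (0,∞) → ℂ be twice differentiable functions satisfying h₀'(r) = −h₁(r) and h₁'(r) = h₀(r) − h₁(r)/r for all r > 0, and let F, G : ℝ → ℂ be twice differentiable and 2π-periodic. Identify ℝ² with ℂ and define ψ on ℂ ∖ {0} by ψ(z) = ( h₀(κ|z|) F(arg z) + h₁(κ|z|) G(arg z) ) |z|^{−n}. Then for every z ≠ 0, writing r = |z| and φ = arg z: Δψ(z) + κ²ψ(z) = 2nκ ( h₁(κr) F(φ) − h₀(κr) G(φ) ) r^{−n−1} + ( h₀(κr) ( F''(φ)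 + n² F(φ) ) + h₁(κr) ( G''(φ) + (n+1)² G(φ) ) ) r^{−n−2}, where Δ denotes the Laplacian on ℝ² ≅ ℂ and ' denotes differentiation of F, G with respect to φ. -/
/-!
In logarithmic coordinates `s = log z = t + iφ` (with `t = log r`) the Laplacian is only rescaled,
`Δ(Φ ∘ log) = |z|⁻² (ΔΦ) ∘ log`, and the Karp term becomes the separated sum
`u(t) F(φ) + v(t) G(φ)` with `u = h₀(κeᵗ) e^{-nt}`, `v = h₁(κeᵗ) e^{-nt}`. The Hankel recurrences
become `∂ₜ h₀(κeᵗ) = -κeᵗ h₁(κeᵗ)` and `∂ₜ h₁(κeᵗ) = κeᵗ h₀(κeᵗ) - h₁(κeᵗ)`, so `u''` and `v''`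
are explicit and the identity is algebra. On the negative real axis, where `log` is not
differentiable, one reflects `z ↦ -z` and shifts `F`, `G` by `π`, which periodicity allows.
-/

open Complex

noncomputable section

/-- The Laplacian of `ψ : ℂ → ℂ` at `z`, viewing `ℂ ≅ ℝ²` as a real vector space: the sum of
the second derivatives in the directions `1` and `i`. -/
def lapC (ψ : ℂ → ℂ) (z : ℂ) : ℂ :=
  fderiv ℝ (fun w => fderiv ℝ ψ w 1) z 1 +
    fderiv ℝ (fun w => fderiv ℝ ψ w Complex.I) z Complex.I

open Filter Function Topology
open scoped Real

def partialsCLM (a b : ℂ) : ℂ →L[ℝ] ℂ :=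
  reCLM.smulRight a + imCLM.smulRight b

@[simp] lemma partialsCLM_apply (a b v : ℂ) : partialsCLM a b v = v.re * a + v.im * b := by
  simp [partialsCLM, real_smul]

lemma ContinuousLinearMap.eq_partialsCLM (L : ℂ →L[ℝ] ℂ) : L = partialsCLM (L 1) (L I) := by
  refine ContinuousLinearMap.ext fun v => ?_
  have hv : v = v.re • (1 : ℂ) + v.im • I := by simp [real_smul]
  conv_lhs => rw [hv, map_add, map_smul, map_smul]
  simp [real_smul]

lemma partialsCLM_add (a b c d : ℂ) :
    partialsCLM a b + partialsCLM c d = partialsCLM (a + c) (b + d) := by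
  ext v
  simp
  ring

lemma Filter.EventuallyEq.lapC_eq {ψ φ : ℂ → ℂ} {z : ℂ} (h : ψ =ᶠ[𝓝 z] φ) :
    lapC ψ z = lapC φ z := by
  have h' : ∀ v, (fun w => fderiv ℝ ψ w v) =ᶠ[𝓝 z] fun w => fderiv ℝ φ w v := fun v =>
    (h.fderiv (𝕜 := ℝ)).mono fun w hw => by dsimp only; rw [hw]
  unfold lapC
  rw [(h' 1).fderiv_eq, (h' I).fderiv_eq]

lemma lapC_comp_neg (ψ : ℂ → ℂ) (z : ℂ) : lapC (fun w => ψ (-w)) z = lapC ψ (-z) := by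
  have hneg : ∀ (g : ℂ → ℂ) (w : ℂ), fderiv ℝ (fun u => g (-u)) w = -fderiv ℝ g (-w) := by
    intro g w
    rw [show (fun u => g (-u)) = g ∘ ContinuousLinearEquiv.neg ℝ from rfl,
      ContinuousLinearEquiv.comp_right_fderiv]
    ext v
    simp
  unfold lapC
  simp only [hneg, neg_apply, fderiv_fun_neg, hneg (fun w => fderiv ℝ ψ w 1),
    hneg (fun w => fderiv ℝ ψ w I), neg_neg]

lemma lapC_eq_of_hasFDerivAt {Φ X Y : ℂ → ℂ} {s : ℂ} {Xx Xy Yx Yy : ℂ}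
    (hΦ : ∀ᶠ t in 𝓝 s, HasFDerivAt Φ (partialsCLM (X t) (Y t)) t)
    (hX : HasFDerivAt X (partialsCLM Xx Xy) s) (hY : HasFDerivAt Y (partialsCLM Yx Yy) s) :
    lapC Φ s = Xx + Yy := by
  have h1 : (fun t => fderiv ℝ Φ t 1) =ᶠ[𝓝 s] X := hΦ.mono fun t ht => by simp [ht.fderiv]
  have hI : (fun t => fderiv ℝ Φ t I) =ᶠ[𝓝 s] Y := hΦ.mono fun t ht => by simp [ht.fderiv]
  unfold lapC
  rw [h1.fderiv_eq, hI.fderiv_eq, hX.fderiv, hY.fderiv]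
  simp

theorem lapC_comp_log {Φ : ℂ → ℂ} {z : ℂ} (hz : z ∈ slitPlane)
    (hΦ : ∀ᶠ s in 𝓝 (log z), DifferentiableAt ℝ Φ s)
    (h1 : DifferentiableAt ℝ (fun s => fderiv ℝ Φ s 1) (log z))
    (hI : DifferentiableAt ℝ (fun s => fderiv ℝ Φ s I) (log z)) :
    lapC (fun w => Φ (log w)) z = lapC Φ (log z) / (‖z‖ : ℂ) ^ 2 := by
  set X := fun s => fderiv ℝ Φ s 1
  set Y := fun s => fderiv ℝ Φ s I
  have hz0 : z ≠ 0 := slitPlane_ne_zero hz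
  have hlog : ∀ w ∈ slitPlane,
      HasFDerivAt log (((1 : ℂ →L[ℂ] ℂ).smulRight w⁻¹).restrictScalars ℝ) w := fun w hw =>
    (hasDerivAt_log hw).hasFDerivAt.restrictScalars ℝ
  have hfirst : ∀ v, (fun w => fderiv ℝ (fun w => Φ (log w)) w v) =ᶠ[𝓝 z]
      fun w => ((v * w⁻¹).re : ℂ) * X (log w) + ((v * w⁻¹).im : ℂ) * Y (log w) := by
    intro v
    filter_upwards [isOpen_slitPlane.mem_nhds hz, (continuousAt_clog hz).eventually hΦ]
      with w hw hΦw
    change fderiv ℝ (Φ ∘ log) w v = _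
    rw [(hΦw.hasFDerivAt.comp w (hlog w hw)).fderiv, (fderiv ℝ Φ (log w)).eq_partialsCLM]
    simp [X, Y]
  have hsecond : ∀ v, HasFDerivAt
      (fun w => ((v * w⁻¹).re : ℂ) * X (log w) + ((v * w⁻¹).im : ℂ) * Y (log w))
      ((((v * z⁻¹).re : ℂ) • (fderiv ℝ X (log z)).comp
          (((1 : ℂ →L[ℂ] ℂ).smulRight z⁻¹).restrictScalars ℝ) +
        X (log z) • ofRealCLM.comp (reCLM.comp
          (((1 : ℂ →L[ℂ] ℂ).smulRight (v * -(z ^ 2)⁻¹)).restrictScalars ℝ))) +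
       (((v * z⁻¹).im : ℂ) • (fderiv ℝ Y (log z)).comp
          (((1 : ℂ →L[ℂ] ℂ).smulRight z⁻¹).restrictScalars ℝ) +
        Y (log z) • ofRealCLM.comp (imCLM.comp
          (((1 : ℂ →L[ℂ] ℂ).smulRight (v * -(z ^ 2)⁻¹)).restrictScalars ℝ)))) z := by
    intro v
    have hinv := ((hasDerivAt_inv hz0).const_mul v).hasFDerivAt.restrictScalars ℝ
    have hre := ofRealCLM.hasFDerivAt.comp z (reCLM.hasFDerivAt.comp z hinv)
    have him := ofRealCLM.hasFDerivAt.comp z (imCLM.hasFDerivAt.comp z hinv)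
    exact (hre.mul (h1.hasFDerivAt.comp z (hlog z hz))).add
      (him.mul (hI.hasFDerivAt.comp z (hlog z hz)))
  have hN : (normSq z : ℂ) ≠ 0 := by exact_mod_cast (normSq_pos.mpr hz0).ne'
  unfold lapC
  rw [(hfirst 1).fderiv_eq, (hfirst I).fderiv_eq, (hsecond 1).fderiv, (hsecond I).fderiv,
    (fderiv ℝ X (log z)).eq_partialsCLM, (fderiv ℝ Y (log z)).eq_partialsCLM]
  -- The first-order terms cancel: `v * v` is `1` for `v = 1` and `-1` for `v = I`.
  simp only [one_mul, inv_re, ofReal_div, mul_neg, inv_im, ofReal_neg, add_apply, smul_apply,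
    ContinuousLinearMap.comp_apply, ContinuousLinearMap.coe_restrictScalars',
    ContinuousLinearMap.smulRight_apply, one_apply_eq_self, smul_eq_mul, partialsCLM_apply,
    reCLM_apply, neg_re, map_pow, ofRealCLM_apply, ofReal_pow, imCLM_apply, neg_im, mul_re, I_re,
    zero_mul, I_im, zero_sub, neg_smul, mul_im, zero_add, neg_apply, neg_mul, neg_zero, neg_neg,
    one_re, ofReal_one, one_im, ofReal_zero, add_zero]
  rw [show (‖z‖ : ℂ) ^ 2 = normSq z by exact_mod_cast Complex.sq_norm z]
  field_simp
  rw [normSq_apply, sq, mul_re]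
  push_cast
  ring

def separatedSum (u v F G : ℝ → ℂ) (s : ℂ) : ℂ :=
  u s.re * F s.im + v s.re * G s.im

lemma hasFDerivAt_re_mul_im {P A : ℝ → ℂ} {p a s : ℂ}
    (hP : HasDerivAt P p s.re) (hA : HasDerivAt A a s.im) :
    HasFDerivAt (fun s : ℂ => P s.re * A s.im) (partialsCLM (p * A s.im) (P s.re * a)) s := by
  have hre : HasFDerivAt (fun s : ℂ => P s.re) (reCLM.smulRight p) s :=
    hP.hasFDerivAt.comp s reCLM.hasFDerivAt
  have him : HasFDerivAt (fun s : ℂ => A s.im) (imCLM.smulRight a) s :=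
    hA.hasFDerivAt.comp s imCLM.hasFDerivAt
  refine (hre.fun_mul him).congr_fderiv ?_
  ext v
  simp
  ring

lemma hasFDerivAt_separatedSum {u u' v v' F F' G G' : ℝ → ℂ} {s : ℂ}
    (hu : HasDerivAt u (u' s.re) s.re) (hv : HasDerivAt v (v' s.re) s.re)
    (hF : HasDerivAt F (F' s.im) s.im) (hG : HasDerivAt G (G' s.im) s.im) :
    HasFDerivAt (separatedSum u v F G)
      (partialsCLM (separatedSum u' v' F G s) (separatedSum u v F' G' s)) s := by
  have h := (hasFDerivAt_re_mul_im hu hF).add (hasFDerivAt_re_mul_im hv hG)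
  rwa [partialsCLM_add] at h

lemma lapC_separatedSum_comp_log {u u' u'' v v' v'' F F' F'' G G' G'' : ℝ → ℂ}
    (hu : ∀ x, HasDerivAt u (u' x) x) (hu' : ∀ x, HasDerivAt u' (u'' x) x)
    (hv : ∀ x, HasDerivAt v (v' x) x) (hv' : ∀ x, HasDerivAt v' (v'' x) x)
    (hF : ∀ y, HasDerivAt F (F' y) y) (hF' : ∀ y, HasDerivAt F' (F'' y) y)
    (hG : ∀ y, HasDerivAt G (G' y) y) (hG' : ∀ y, HasDerivAt G' (G'' y) y)
    {z : ℂ} (hz : z ∈ slitPlane) :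
    lapC (fun w => separatedSum u v F G (log w)) z =
      (separatedSum u'' v'' F G (log z) + separatedSum u v F'' G'' (log z)) /
        (‖z‖ : ℂ) ^ 2 := by
  have hΦ : ∀ s, HasFDerivAt (separatedSum u v F G)
      (partialsCLM (separatedSum u' v' F G s) (separatedSum u v F' G' s)) s := fun s =>
    hasFDerivAt_separatedSum (hu _) (hv _) (hF _) (hG _)
  have hX : ∀ s, HasFDerivAt (separatedSum u' v' F G)
      (partialsCLM (separatedSum u'' v'' F G s) (separatedSum u' v' F' G' s)) s := fun s =>
    hasFDerivAt_separatedSum (hu' _) (hv' _) (hF _) (hG _)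
  have hY : ∀ s, HasFDerivAt (separatedSum u v F' G')
      (partialsCLM (separatedSum u' v' F' G' s) (separatedSum u v F'' G'' s)) s := fun s =>
    hasFDerivAt_separatedSum (hu _) (hv _) (hF' _) (hG' _)
  have h1 : (fun s => fderiv ℝ (separatedSum u v F G) s 1) = separatedSum u' v' F G := by
    ext s; simp [(hΦ s).fderiv]
  have hI : (fun s => fderiv ℝ (separatedSum u v F G) s I) = separatedSum u v F' G' := by
    ext s; simp [(hΦ s).fderiv]
  rw [lapC_comp_log hz (.of_forall fun s => (hΦ s).differentiableAt)
    (h1 ▸ (hX _).differentiableAt) (hI ▸ (hY _).differentiableAt),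
    lapC_eq_of_hasFDerivAt (.of_forall hΦ) (hX _) (hY _)]

/-- `H₀ t`, `H₁ t`, `R t`, `E t` stand for `h₀(κeᵗ)`, `h₁(κeᵗ)`, `κeᵗ`, `e^{-ct}`. -/
lemma lapC_separatedSum_comp_log_of_hankel {H₀ H₁ R E F G : ℝ → ℂ} {c : ℂ}
    (hH₀ : ∀ t, HasDerivAt H₀ (-(R t * H₁ t)) t)
    (hH₁ : ∀ t, HasDerivAt H₁ (R t * H₀ t - H₁ t) t)
    (hR : ∀ t, HasDerivAt R (R t) t) (hE : ∀ t, HasDerivAt E (-c * E t) t)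
    (hF : Differentiable ℝ F) (hF' : Differentiable ℝ (deriv F))
    (hG : Differentiable ℝ G) (hG' : Differentiable ℝ (deriv G))
    {z : ℂ} (hz : z ∈ slitPlane) :
    let x := (log z).re
    let y := (log z).im
    lapC (fun w => separatedSum (fun t => H₀ t * E t) (fun t => H₁ t * E t) F G (log w)) z *
        (‖z‖ : ℂ) ^ 2 +
      R x ^ 2 * separatedSum (fun t => H₀ t * E t) (fun t => H₁ t * E t) F G (log z) =
      (2 * c * R x * (H₁ x * F y - H₀ x * G y) + H₀ x * (deriv (deriv F) y + c ^ 2 * F y) +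
        H₁ x * (deriv (deriv G) y + (c + 1) ^ 2 * G y)) * E x := by
  intro x y
  have hu : ∀ t, HasDerivAt (fun t => H₀ t * E t) ((-(R t * H₁ t) - c * H₀ t) * E t) t :=
    fun t => ((hH₀ t).fun_mul (hE t)).congr_deriv (by ring)
  have hu' : ∀ t, HasDerivAt (fun t => (-(R t * H₁ t) - c * H₀ t) * E t)
      (((c ^ 2 - R t ^ 2) * H₀ t + 2 * c * R t * H₁ t) * E t) t := fun t =>
    ((((hR t).fun_mul (hH₁ t)).fun_neg.fun_sub ((hH₀ t).const_mul c)).fun_mul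
      (hE t)).congr_deriv (by ring)
  have hv : ∀ t, HasDerivAt (fun t => H₁ t * E t) ((R t * H₀ t - (c + 1) * H₁ t) * E t) t :=
    fun t => ((hH₁ t).fun_mul (hE t)).congr_deriv (by ring)
  have hv' : ∀ t, HasDerivAt (fun t => (R t * H₀ t - (c + 1) * H₁ t) * E t)
      ((((c + 1) ^ 2 - R t ^ 2) * H₁ t - 2 * c * R t * H₀ t) * E t) t := fun t =>
    ((((hR t).fun_mul (hH₀ t)).fun_sub ((hH₁ t).const_mul (c + 1))).fun_mul
      (hE t)).congr_deriv (by ring)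
  have hz' : (‖z‖ : ℂ) ≠ 0 := by exact_mod_cast norm_ne_zero_iff.mpr (slitPlane_ne_zero hz)
  rw [lapC_separatedSum_comp_log hu hu' hv hv' (fun y => (hF y).hasDerivAt)
    (fun y => (hF' y).hasDerivAt) (fun y => (hG y).hasDerivAt) (fun y => (hG' y).hasDerivAt) hz,
    div_mul_cancel₀ _ (pow_ne_zero 2 hz')]
  simp only [separatedSum]
  ring

def karpTerm (κ : ℝ) (n : ℕ) (h₀ h₁ F G : ℝ → ℂ) (z : ℂ) : ℂ :=
  (h₀ (κ * ‖z‖) * F (arg z) + h₁ (κ * ‖z‖) * G (arg z)) / (‖z‖ : ℂ) ^ n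

lemma karpTerm_eq_separatedSum_log (κ : ℝ) (n : ℕ) (h₀ h₁ F G : ℝ → ℂ) {w : ℂ}
    (hw : w ≠ 0) :
    karpTerm κ n h₀ h₁ F G w =
      separatedSum (fun t => h₀ (κ * Real.exp t) * (Real.exp (-(n * t)) : ℂ))
        (fun t => h₁ (κ * Real.exp t) * (Real.exp (-(n * t)) : ℂ)) F G (log w) := by
  have hw' : 0 < ‖w‖ := norm_pos_iff.mpr hw
  simp only [karpTerm, separatedSum, log_re, log_im, Real.exp_neg, Real.exp_nat_mul,
    Real.exp_log hw', div_eq_mul_inv]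
  push_cast
  ring

lemma hasDerivAt_comp_const_mul_exp {g g' : ℝ → ℂ} {κ : ℝ} (hκ : 0 < κ)
    (hg : ∀ r, 0 < r → HasDerivAt g (g' r) r) (t : ℝ) :
    HasDerivAt (fun t => g (κ * Real.exp t)) ((κ * Real.exp t : ℝ) * g' (κ * Real.exp t)) t :=
  ((hg _ (by positivity)).scomp t ((Real.hasDerivAt_exp t).const_mul κ)).congr_deriv real_smul

theorem helmholtz_karpTerm_of_mem_slitPlane {κ : ℝ} (hκ : 0 < κ) (n : ℕ) {h₀ h₁ : ℝ → ℂ}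
    (hd₀ : ∀ r : ℝ, 0 < r → HasDerivAt h₀ (-(h₁ r)) r)
    (hd₁ : ∀ r : ℝ, 0 < r → HasDerivAt h₁ (h₀ r - h₁ r / r) r) {F G : ℝ → ℂ}
    (hF : Differentiable ℝ F) (hF' : Differentiable ℝ (deriv F))
    (hG : Differentiable ℝ G) (hG' : Differentiable ℝ (deriv G))
    {z : ℂ} (hz : z ∈ slitPlane) :
    lapC (karpTerm κ n h₀ h₁ F G) z + (κ : ℂ) ^ 2 * karpTerm κ n h₀ h₁ F G z =
      2 * (n : ℂ) * (κ : ℂ) *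
          (h₁ (κ * ‖z‖) * F (arg z) - h₀ (κ * ‖z‖) * G (arg z)) /
          ((‖z‖ : ℂ)) ^ (n + 1) +
        (h₀ (κ * ‖z‖) * (deriv (deriv F) (arg z) + (n : ℂ) ^ 2 * F (arg z)) +
          h₁ (κ * ‖z‖) * (deriv (deriv G) (arg z) + ((n : ℂ) + 1) ^ 2 * G (arg z))) /
          ((‖z‖ : ℂ)) ^ (n + 2) := by
  have hz0 : z ≠ 0 := slitPlane_ne_zero hz
  set Φ := separatedSum (fun t => h₀ (κ * Real.exp t) * (Real.exp (-(n * t)) : ℂ))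
    (fun t => h₁ (κ * Real.exp t) * (Real.exp (-(n * t)) : ℂ)) F G
  have hH₁ : ∀ t, HasDerivAt (fun t => h₁ (κ * Real.exp t))
      ((κ * Real.exp t : ℝ) * h₀ (κ * Real.exp t) - h₁ (κ * Real.exp t)) t := fun t =>
    (hasDerivAt_comp_const_mul_exp hκ hd₁ t).congr_deriv (by
      have : ((κ * Real.exp t : ℝ) : ℂ) ≠ 0 := by exact_mod_cast (by positivity : κ * _ ≠ 0)
      field_simp)
  have hR : ∀ t, HasDerivAt (fun t => ((κ * Real.exp t : ℝ) : ℂ)) (κ * Real.exp t : ℝ) t :=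
    fun t => ((Real.hasDerivAt_exp t).const_mul κ).ofReal_comp
  have hE : ∀ t, HasDerivAt (fun t => ((Real.exp (-(n * t)) : ℝ) : ℂ))
      (-(n : ℂ) * Real.exp (-(n * t))) t := fun t =>
    (((hasDerivAt_id t).const_mul (n : ℝ)).fun_neg.exp.ofReal_comp).congr_deriv
      (by simp [mul_comm])
  have key := lapC_separatedSum_comp_log_of_hankel
    (fun t => (hasDerivAt_comp_const_mul_exp hκ hd₀ t).congr_deriv (mul_neg _ _)) hH₁ hR hE
    hF hF' hG hG' hz
  change lapC (fun w => Φ (log w)) z * _ + _ * Φ (log z) = _ at key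
  have hK : karpTerm κ n h₀ h₁ F G =ᶠ[𝓝 z] fun w => Φ (log w) :=
    (eventually_ne_nhds hz0).mono fun w hw => karpTerm_eq_separatedSum_log κ n h₀ h₁ F G hw
  rw [hK.lapC_eq, show karpTerm κ n h₀ h₁ F G z = Φ (log z) from
    karpTerm_eq_separatedSum_log κ n h₀ h₁ F G hz0]
  generalize lapC (fun w => Φ (log w)) z = L at key ⊢
  generalize Φ (log z) = S at key ⊢
  have hpos : 0 < ‖z‖ := norm_pos_iff.mpr hz0
  have hz' : (‖z‖ : ℂ) ≠ 0 := by exact_mod_cast hpos.ne'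
  rw [log_re, log_im, Real.exp_neg, Real.exp_nat_mul, Real.exp_log hpos] at key
  push_cast at key
  rw [← div_eq_mul_inv, eq_div_iff (pow_ne_zero _ hz')] at key
  field_simp
  linear_combination (‖z‖ : ℂ) ^ (n + 1) * key

lemma Function.Periodic.apply_arg_neg {α : Type*} {H : ℝ → α} (hH : Periodic H (2 * π))
    {w : ℂ} (hw : w ≠ 0) : H (arg (-w)) = H (arg w + π) := by
  obtain ⟨k, hk⟩ := Real.Angle.angle_eq_iff_two_pi_dvd_sub.1
    ((arg_neg_coe_angle hw).trans (Real.Angle.coe_add _ _).symm)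
  rw [show arg (-w) = arg w + π + k * (2 * π) by linarith, hH.int_mul k]

lemma karpTerm_neg (κ : ℝ) (n : ℕ) (h₀ h₁ : ℝ → ℂ) {F G : ℝ → ℂ}
    (hF : Periodic F (2 * π)) (hG : Periodic G (2 * π)) {w : ℂ} (hw : w ≠ 0) :
    karpTerm κ n h₀ h₁ F G (-w) = karpTerm κ n h₀ h₁ (F <| · + π) (G <| · + π) w := by
  simp only [karpTerm, norm_neg, hF.apply_arg_neg hw, hG.apply_arg_neg hw]

lemma deriv_comp_add_const_eq (f : ℝ → ℂ) (a : ℝ) :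
    deriv (f <| · + a) = (deriv f <| · + a) :=
  funext fun _ => deriv_comp_add_const f a _

/-- The term-by-term identity (5.7): applying the Helmholtz operator `Δ + κ²` to one pair of
terms `(h₀(κ|z|) F(arg z) + h₁(κ|z|) G(arg z)) |z|^{−n}` of a Karp-type expansion, where
`h₀' = −h₁` and `h₁'(r) = h₀(r) − h₁(r)/r` (the identities satisfied by the Hankel functions
`H₀`, `H₁` of the first kind). -/
theorem karp_term_helmholtz_identity
    (κ : ℝ) (hκ : 0 < κ) (n : ℕ)
    (h₀ h₁ : ℝ → ℂ)
    (hd₀ : ∀ r : ℝ, 0 < r → HasDerivAt h₀ (-(h₁ r)) r)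
    (hd₁ : ∀ r : ℝ, 0 < r → HasDerivAt h₁ (h₀ r - h₁ r / r) r)
    (F G : ℝ → ℂ)
    (hF : Differentiable ℝ F) (hF' : Differentiable ℝ (deriv F))
    (hG : Differentiable ℝ G) (hG' : Differentiable ℝ (deriv G))
    (hFper : Function.Periodic F (2 * Real.pi)) (hGper : Function.Periodic G (2 * Real.pi))
    (ψ : ℂ → ℂ)
    (hψ : ∀ z : ℂ, ψ z =
      (h₀ (κ * ‖z‖) * F (Complex.arg z) + h₁ (κ * ‖z‖) * G (Complex.arg z)) /
        ((‖z‖ : ℂ)) ^ n) :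
    ∀ z : ℂ, z ≠ 0 →
      lapC ψ z + (κ : ℂ) ^ 2 * ψ z =
        2 * (n : ℂ) * (κ : ℂ) *
            (h₁ (κ * ‖z‖) * F (Complex.arg z) -
              h₀ (κ * ‖z‖) * G (Complex.arg z)) / ((‖z‖ : ℂ)) ^ (n + 1) +
          (h₀ (κ * ‖z‖) *
              (deriv (deriv F) (Complex.arg z) + (n : ℂ) ^ 2 * F (Complex.arg z)) +
            h₁ (κ * ‖z‖) *
              (deriv (deriv G) (Complex.arg z) + ((n : ℂ) + 1) ^ 2 * G (Complex.arg z))) /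
            ((‖z‖ : ℂ)) ^ (n + 2) := by
  intro z hz0
  obtain rfl : ψ = karpTerm κ n h₀ h₁ F G := funext hψ
  by_cases hz : z ∈ slitPlane
  · exact helmholtz_karpTerm_of_mem_slitPlane hκ n hd₀ hd₁ hF hF' hG hG' hz
  obtain ⟨hre, him⟩ : z.re < 0 ∧ z.im = 0 := by
    rw [mem_slitPlane_iff, not_or, not_lt, not_not] at hz
    exact ⟨hz.1.lt_of_ne fun h => hz0 (ext h hz.2), hz.2⟩
  have hnz : -z ∈ slitPlane := mem_slitPlane_iff.2 (Or.inl (by simpa using hre))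
  have hK : karpTerm κ n h₀ h₁ F G =ᶠ[𝓝 z]
      fun w => karpTerm κ n h₀ h₁ (F <| · + π) (G <| · + π) (-w) := by
    filter_upwards [(isOpen_slitPlane.preimage continuous_neg).mem_nhds hnz] with w hw
    simpa using karpTerm_neg κ n h₀ h₁ hFper hGper (slitPlane_ne_zero hw)
  have hshifted := helmholtz_karpTerm_of_mem_slitPlane (F := (F <| · + π))
    (G := (G <| · + π)) hκ n hd₀ hd₁ (hF.comp (differentiable_id.add_const π))
    (deriv_comp_add_const_eq F π ▸ hF'.comp (differentiable_id.add_const π))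
    (hG.comp (differentiable_id.add_const π))
    (deriv_comp_add_const_eq G π ▸ hG'.comp (differentiable_id.add_const π)) hnz
  rw [hK.lapC_eq, lapC_comp_neg, hK.eq_of_nhds, hshifted, arg_eq_pi_iff.2 ⟨hre, him⟩,
    arg_eq_zero_iff.2 ⟨by simpa using hre.le, by simpa using him⟩]
  simp [deriv_comp_add_const_eq]
end
end
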